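/- Let P be a symmetric positive definite n×n real matrix, R a symmetric positive definite m×m real matrix, H an m×n real matrix, and K* = P·Hᵀ·(H·P·Hᵀ + R)⁻¹ the Kalman gain. Then for every index i, the Fréchet derivative of the real-valued map K ↦ a_i^K (the i-th coefficient of the characteristic polynomial of P_K) at the point K* is the zero linear map; i.e., K* is a critical point of each coefficient of the characteristic polynomial. -/

import Mathlib

/-! With `S = H·P·Hᵀ + R`, the Kalman gain completes the square:
`P_K = (K - K*)·S·(K - K*)ᵀ + P_{K*}`, so `K ↦ P_K` is stationary at `K*`. Each coefficient of
the characteristic polynomial is a polynomial in the matrix entries, hence differentiable, and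
the chain rule makes its derivative at `K*` vanish. -/

open Matrix

/-- The posterior covariance matrix `P_K = (I - K·H)·P·(I - K·H)ᵀ + K·R·Kᵀ`. -/
noncomputable def postCov {n m : ℕ} (P : Matrix (Fin n) (Fin n) ℝ)
    (R : Matrix (Fin m) (Fin m) ℝ) (H : Matrix (Fin m) (Fin n) ℝ)
    (K : Matrix (Fin n) (Fin m) ℝ) : Matrix (Fin n) (Fin n) ℝ :=
  (1 - K * H) * P * (1 - K * H)ᵀ + K * R * Kᵀ

/-- The Kalman gain `K* = P·Hᵀ·(H·P·Hᵀ + R)⁻¹`. -/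
noncomputable def kalmanGain {n m : ℕ} (P : Matrix (Fin n) (Fin n) ℝ)
    (R : Matrix (Fin m) (Fin m) ℝ) (H : Matrix (Fin m) (Fin n) ℝ) :
    Matrix (Fin n) (Fin m) ℝ :=
  P * Hᵀ * (H * P * Hᵀ + R)⁻¹

attribute [local instance] Matrix.normedAddCommGroup Matrix.normedSpace

theorem ContinuousLinearMap.hasFDerivAt_apply_sub_sub_add {𝕜 E F : Type*}
    [NontriviallyNormedField 𝕜] [NormedAddCommGroup E] [NormedSpace 𝕜 E]
    [NormedAddCommGroup F] [NormedSpace 𝕜 F] (B : E →L[𝕜] E →L[𝕜] F) (x₀ : E) (c : F) :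
    HasFDerivAt (fun x => B (x - x₀) (x - x₀) + c) (0 : E →L[𝕜] F) x₀ := by
  have hsub : HasFDerivAt (fun x : E => x - x₀) (ContinuousLinearMap.id 𝕜 E) x₀ :=
    (hasFDerivAt_id x₀).sub_const x₀
  simpa using (B.hasFDerivAt_of_bilinear hsub hsub).add_const c

theorem Matrix.hasFDerivAt_sub_mul_mul_sub_transpose_add {𝕜 l m : Type*}
    [NontriviallyNormedField 𝕜] [CompleteSpace 𝕜] [Fintype l] [Fintype m]
    (S : Matrix m m 𝕜) (K₀ : Matrix l m 𝕜) (C : Matrix l l 𝕜) :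
    HasFDerivAt (fun K : Matrix l m 𝕜 => (K - K₀) * S * (K - K₀)ᵀ + C)
      (0 : Matrix l m 𝕜 →L[𝕜] Matrix l l 𝕜) K₀ :=
  ContinuousLinearMap.hasFDerivAt_apply_sub_sub_add
    ((mulLinearMap 𝕜 ∘ₗ mulRightLinearMap l 𝕜 S).compl₂
      (transposeLinearEquiv l m 𝕜 𝕜).toLinearMap).toContinuousBilinearMap K₀ C

theorem Matrix.charpoly_coeff_eq_aeval_univ {R ι : Type*} [CommRing R] [Fintype ι]
    [DecidableEq ι] (M : Matrix ι ι R) (i : ℕ) :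
    M.charpoly.coeff i =
      MvPolynomial.aeval (fun q : ι × ι => M q.1 q.2) ((charpoly.univ ℤ ι).coeff i) := by
  rw [MvPolynomial.aeval_def, ← MvPolynomial.coe_eval₂Hom, charpoly.univ_coeff_eval₂Hom]
  rfl

theorem Matrix.differentiable_charpoly_coeff {𝕜 ι : Type*} [NontriviallyNormedField 𝕜]
    [CompleteSpace 𝕜] [Fintype ι] [DecidableEq ι] (i : ℕ) :
    Differentiable 𝕜 (fun M : Matrix ι ι 𝕜 => M.charpoly.coeff i) := by
  have h : (fun M : Matrix ι ι 𝕜 => M.charpoly.coeff i) = fun M =>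
      MvPolynomial.aeval (fun q : ι × ι => M q.1 q.2) ((charpoly.univ ℤ ι).coeff i) :=
    funext fun M => M.charpoly_coeff_eq_aeval_univ i
  rw [h]
  intro M
  refine (AnalyticAt.aeval_mvPolynomial (fun q => ?_) _).differentiableAt
  exact (entryLinearMap 𝕜 𝕜 q.1 q.2).toContinuousLinearMap.analyticAt M

section Kalman
variable {n m : ℕ} {P : Matrix (Fin n) (Fin n) ℝ} {R : Matrix (Fin m) (Fin m) ℝ}
  (H : Matrix (Fin m) (Fin n) ℝ)

theorem postCov_eq_sub_sub_add (K : Matrix (Fin n) (Fin m) ℝ) :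
    postCov P R H K = P - K * (H * P) - P * Hᵀ * Kᵀ + K * (H * P * Hᵀ + R) * Kᵀ := by
  simp only [postCov, transpose_sub, transpose_one, transpose_mul, Matrix.sub_mul,
    Matrix.mul_sub, Matrix.mul_one, Matrix.one_mul, Matrix.mul_add, Matrix.add_mul,
    Matrix.mul_assoc]
  abel

theorem kalmanGain_mul (hS : IsUnit (H * P * Hᵀ + R).det) :
    kalmanGain P R H * (H * P * Hᵀ + R) = P * Hᵀ :=
  nonsing_inv_mul_cancel_right _ _ hS

theorem mul_transpose_kalmanGain (hP : P.IsSymm) (hR : R.IsSymm)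
    (hS : IsUnit (H * P * Hᵀ + R).det) :
    (H * P * Hᵀ + R) * (kalmanGain P R H)ᵀ = H * P := by
  have hSsymm : (H * P * Hᵀ + R)ᵀ = H * P * Hᵀ + R := by
    rw [transpose_add, transpose_mul, transpose_mul, transpose_transpose, hP.eq, hR.eq,
      Matrix.mul_assoc]
  simpa only [transpose_mul, hSsymm, transpose_transpose, hP.eq] using
    congrArg transpose (kalmanGain_mul H hS)

theorem postCov_eq_add_postCov_kalmanGain (hP : P.IsSymm) (hR : R.IsSymm)
    (hS : IsUnit (H * P * Hᵀ + R).det) (K : Matrix (Fin n) (Fin m) ℝ) :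
    postCov P R H K = (K - kalmanGain P R H) * (H * P * Hᵀ + R) * (K - kalmanGain P R H)ᵀ
        + postCov P R H (kalmanGain P R H) := by
  have hGS := kalmanGain_mul H hS
  have hSG := mul_transpose_kalmanGain H hP hR hS
  have hGSG : P * Hᵀ * (kalmanGain P R H)ᵀ = kalmanGain P R H * (H * P) := by
    rw [← hGS, Matrix.mul_assoc, hSG]
  rw [postCov_eq_sub_sub_add, postCov_eq_sub_sub_add]
  simp only [transpose_sub, Matrix.sub_mul, Matrix.mul_sub]
  rw [hGS, Matrix.mul_assoc K _ (kalmanGain P R H)ᵀ, hSG, hGSG]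
  abel

theorem hasFDerivAt_postCov_kalmanGain (hP : P.IsSymm) (hR : R.IsSymm)
    (hS : IsUnit (H * P * Hᵀ + R).det) :
    HasFDerivAt (postCov P R H) (0 : Matrix (Fin n) (Fin m) ℝ →L[ℝ] Matrix (Fin n) (Fin n) ℝ)
      (kalmanGain P R H) := by
  rw [funext (postCov_eq_add_postCov_kalmanGain H hP hR hS)]
  exact hasFDerivAt_sub_mul_mul_sub_transpose_add _ _ _

end Kalman

theorem fderiv_charpoly_coeff_postCov_kalmanGain {n m : ℕ} (P : Matrix (Fin n) (Fin n) ℝ)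
    (R : Matrix (Fin m) (Fin m) ℝ) (H : Matrix (Fin m) (Fin n) ℝ)
    (hP : P.PosDef) (hR : R.PosDef) (i : ℕ) :
    fderiv ℝ (fun K : Matrix (Fin n) (Fin m) ℝ => (postCov P R H K).charpoly.coeff i)
      (kalmanGain P R H) = 0 := by
  have hPsymm : P.IsSymm := isHermitian_iff_isSymm.mp hP.isHermitian
  have hRsymm : R.IsSymm := isHermitian_iff_isSymm.mp hR.isHermitian
  have hS : (H * P * Hᵀ + R).PosDef := by
    simpa only [conjTranspose_eq_transpose_of_trivial] using
      PosDef.posSemidef_add (hP.posSemidef.mul_mul_conjTranspose_same H) hR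
  have hpost := hasFDerivAt_postCov_kalmanGain H hPsymm hRsymm hS.det_pos.ne'.isUnit
  exact ((differentiable_charpoly_coeff i _).hasFDerivAt.comp _ hpost).fderiv.trans
    (ContinuousLinearMap.comp_zero _)
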